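/- Let U be a finite type, A : Fin m → Finset U a family of finite sets, and l ≥ 1 a natural number. Let OPT = max over index sets e with |e| ≤ l of |⋃_{j ∈ e} A_j|. Consider any greedy sequence of index sets e_0 = ∅ and e_{t+1} = e_t ∪ {j_t}, where at each step j_t is chosen to maximize the number of newly covered elements |⋃_{j ∈ e_t ∪ {j}} A_j| − |⋃_{j ∈ e_t} A_j| over all indices j. Then the greedy solution after l steps satisfies |⋃_{j ∈ e_l} A_j| ≥ (1 − (1 − 1/l)^l) · OPT ≥ (1 − 1/e) · OPT, where e is Euler's number. -/

import Mathlib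

/-!
Let `S` be what the greedy choice has covered so far. An optimal solution `o` with at most `l`
indices covers at most `|S| + ∑_{i ∈ o} |A i \ S|` elements, and each summand is bounded by the
greedy gain, so the gap `OPT - |S|` is at most `l` times the gain of the next greedy step. Thus
the gap shrinks by a factor `1 - 1/l` per step, leaving at most `(1 - 1/l)^l · OPT` after `l`
steps, and `(1 - 1/l)^l ≤ e⁻¹`.
-/

open Finset

section Coverage

variable {ι α : Type*} [DecidableEq α] (A : ι → Finset α)

theorem card_biUnion_insert_eq_card_sdiff_add [DecidableEq ι] (s : Finset ι) (j : ι) :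
    #((insert j s).biUnion A) = #(A j \ s.biUnion A) + #(s.biUnion A) := by
  rw [biUnion_insert, card_sdiff_add_card]

theorem card_biUnion_le_card_add_sum_card_sdiff (o : Finset ι) (S : Finset α) :
    #(o.biUnion A) ≤ #S + ∑ i ∈ o, #(A i \ S) := by
  have hsub : o.biUnion A \ S ⊆ o.biUnion (fun i ↦ A i \ S) := by
    intro x hx
    simp only [mem_sdiff, mem_biUnion] at hx ⊢
    obtain ⟨⟨i, hi, hxi⟩, hxS⟩ := hx
    exact ⟨i, hi, hxi, hxS⟩
  calc #(o.biUnion A) ≤ #(o.biUnion A \ S) + #S := card_le_card_sdiff_add_card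
    _ ≤ ∑ i ∈ o, #(A i \ S) + #S := by
        gcongr
        exact (card_le_card hsub).trans card_biUnion_le
    _ = #S + ∑ i ∈ o, #(A i \ S) := add_comm _ _

theorem card_biUnion_le_card_add_mul_greedy_gain [DecidableEq ι] {s o : Finset ι} {j : ι}
    {l : ℕ} (hj : ∀ j', #((insert j' s).biUnion A) ≤ #((insert j s).biUnion A))
    (ho : #o ≤ l) :
    #(o.biUnion A) ≤ #(s.biUnion A) + l * #(A j \ s.biUnion A) := by
  have hgain : ∀ i ∈ o, #(A i \ s.biUnion A) ≤ #(A j \ s.biUnion A) := fun i _ ↦ by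
    have := hj i
    rwa [card_biUnion_insert_eq_card_sdiff_add, card_biUnion_insert_eq_card_sdiff_add,
      Nat.add_le_add_iff_right] at this
  calc #(o.biUnion A) ≤ #(s.biUnion A) + ∑ i ∈ o, #(A i \ s.biUnion A) :=
        card_biUnion_le_card_add_sum_card_sdiff A o _
    _ ≤ #(s.biUnion A) + #o * #(A j \ s.biUnion A) := by
        gcongr
        simpa using sum_le_card_nsmul _ _ _ hgain
    _ ≤ #(s.biUnion A) + l * #(A j \ s.biUnion A) := by gcongr

end Coverage

theorem sub_le_one_sub_one_div_pow_mul_of_sub_le_mul_sub {F : ℕ → ℝ} {c L : ℝ} (hL : 1 ≤ L)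
    (h : ∀ t, c - F t ≤ L * (F (t + 1) - F t)) (t : ℕ) :
    c - F t ≤ (1 - 1 / L) ^ t * (c - F 0) := by
  induction t with
  | zero => simp
  | succ t ih =>
    have hq : 0 ≤ 1 - 1 / L := by
      rw [sub_nonneg, div_le_one (by linarith)]
      exact hL
    have hstep : c - F (t + 1) ≤ (1 - 1 / L) * (c - F t) := by
      have hdiv : (c - F t) / L ≤ F (t + 1) - F t := by
        rw [div_le_iff₀ (by linarith)]
        linarith [h t]
      rw [one_sub_mul, one_div_mul_eq_div]
      linarith
    calc c - F (t + 1) ≤ (1 - 1 / L) * (c - F t) := hstep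
      _ ≤ (1 - 1 / L) * ((1 - 1 / L) ^ t * (c - F 0)) := by gcongr
      _ = (1 - 1 / L) ^ (t + 1) * (c - F 0) := by ring

theorem one_sub_one_div_pow_le_one_div_exp {n : ℕ} (hn : 1 ≤ n) :
    (1 - 1 / (n : ℝ)) ^ n ≤ 1 / Real.exp 1 := by
  rw [one_div (Real.exp 1), ← Real.exp_neg]
  exact Real.one_sub_div_pow_le_exp_neg (by exact_mod_cast hn)

theorem greedy_max_coverage_guarantee_general {m : ℕ} {U : Type*} [DecidableEq U]
    (A : Fin m → Finset U) (l : ℕ) (hl : 1 ≤ l)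
    (e : ℕ → Finset (Fin m)) (h0 : e 0 = ∅)
    (hgreedy : ∀ t : ℕ, ∃ j : Fin m,
      e (t + 1) = insert j (e t) ∧
      ∀ j' : Fin m, ((insert j' (e t)).biUnion A).card ≤ ((insert j (e t)).biUnion A).card)
    (OPT : ℕ)
    (hOPT : IsGreatest {s : ℕ | ∃ e' : Finset (Fin m), e'.card ≤ l ∧
      s = (e'.biUnion A).card} OPT) :
    (1 - (1 - 1 / (l : ℝ)) ^ l) * OPT ≤ (((e l).biUnion A).card : ℝ) ∧
    (1 - 1 / Real.exp 1) * OPT ≤ (1 - (1 - 1 / (l : ℝ)) ^ l) * OPT := by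
  obtain ⟨o, ho, rfl⟩ := hOPT.1
  have hgap : ∀ t, (#(o.biUnion A) : ℝ) - #((e t).biUnion A) ≤
      l * (#((e (t + 1)).biUnion A) - #((e t).biUnion A) : ℝ) := fun t ↦ by
    obtain ⟨j, hstep, hj⟩ := hgreedy t
    have hopt := card_biUnion_le_card_add_mul_greedy_gain A hj ho
    rw [hstep, card_biUnion_insert_eq_card_sdiff_add]
    push_cast
    have : (#(o.biUnion A) : ℝ) ≤ #((e t).biUnion A) + l * #(A j \ (e t).biUnion A) := by
      exact_mod_cast hopt
    linarith
  have hdecay := sub_le_one_sub_one_div_pow_mul_of_sub_le_mul_sub (by exact_mod_cast hl) hgap l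
  rw [h0, biUnion_empty, card_empty, Nat.cast_zero, sub_zero] at hdecay
  constructor
  · linarith
  · gcongr
    exact one_sub_one_div_pow_le_one_div_exp hl

/-- greedy approximation for maximum coverage: any greedy sequence,
starting from `∅` and at each step inserting an index maximizing the coverage gain,
achieves after `l` steps at least `(1 - (1 - 1/l)^l) · OPT ≥ (1 - 1/e) · OPT`, where
`OPT` is the optimal coverage with at most `l` indices. -/
theorem greedy_max_coverage_guarantee {m : ℕ} {U : Type*} [Fintype U] [DecidableEq U]
    (A : Fin m → Finset U) (l : ℕ) (hl : 1 ≤ l)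
    (e : ℕ → Finset (Fin m)) (h0 : e 0 = ∅)
    (hgreedy : ∀ t : ℕ, ∃ j : Fin m,
      e (t + 1) = insert j (e t) ∧
      ∀ j' : Fin m, ((insert j' (e t)).biUnion A).card ≤ ((insert j (e t)).biUnion A).card)
    (OPT : ℕ)
    (hOPT : IsGreatest {s : ℕ | ∃ e' : Finset (Fin m), e'.card ≤ l ∧
      s = (e'.biUnion A).card} OPT) :
    (1 - (1 - 1 / (l : ℝ)) ^ l) * OPT ≤ (((e l).biUnion A).card : ℝ) ∧
    (1 - 1 / Real.exp 1) * OPT ≤ (1 - (1 - 1 / (l : ℝ)) ^ l) * OPT :=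
  greedy_max_coverage_guarantee_general A l hl e h0 hgreedy OPT hOPT
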